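/- arXiv:1301.1786 — 2 statements merged into one kernel-verified Lean document; each statement's English description precedes it below -/
import Mathlib

section
/- Let m ≥ 0 and ν ≥ m+1 be integers. Then, as z → 0, L_{m,ν}(z) = -z^{2ν-m-1}/(2^{2ν-m-1} ν! (ν-m-1)!) + o(z^{2ν-m-1}). In particular, L_{m,ν} has a zero of order exactly 2ν-m-1 at z = 0. -/
/-! Writing `J_n(z) = (z/2)^n F_n((z/2)^2)` with `F_n(w) = Σ_r (-1)^r w^r / (r! (n+r)!)`, which is
continuous at `0` with `F_n(0) = 1/n!`, one gets `L_{m,ν}(z) = (z/2)^(2ν-m-1) Φ((z/2)^2)` where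
`Φ(w) = w F_{ν+1}(w) F_{ν-m}(w) - F_ν(w) F_{ν-m-1}(w)` is continuous at `0` with
`Φ(0) = -1/(ν! (ν-m-1)!)`. -/

open scoped Nat
open Asymptotics MeasureTheory

noncomputable def besselJNat (n : ℕ) (z : ℂ) : ℂ :=
  ∑' r : ℕ, ((-1) ^ r / ((Nat.factorial r : ℂ) * (Nat.factorial (n + r) : ℂ))) * (z / 2) ^ (n + 2 * r)

/-- Bessel function of the first kind of integer order, with `J_{-n} = (-1)^n J_n`. -/
noncomputable def besselJ (n : ℤ) (z : ℂ) : ℂ :=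
  if 0 ≤ n then besselJNat n.toNat z else (-1 : ℂ) ^ n * besselJNat (-n).toNat z

/-- `L_{m,ν}(z) = J_{ν+1}(z) J_{ν-m}(z) - J_ν(z) J_{ν-m-1}(z)`. -/
noncomputable def besselL (m : ℕ) (ν : ℤ) (z : ℂ) : ℂ :=
  besselJ (ν + 1) z * besselJ (ν - m) z - besselJ ν z * besselJ (ν - m - 1) z

open Filter Topology

theorem continuousAt_tsum_mul_pow {𝕜 : Type*} [NormedField 𝕜] [CompleteSpace 𝕜] (a : ℕ → 𝕜)
    (ha : Summable fun r => ‖a r‖) : ContinuousAt (fun w => ∑' r, a r * w ^ r) 0 := by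
  have hcont : ContinuousOn (fun w => ∑' r, a r * w ^ r) (Metric.closedBall 0 1) := by
    refine continuousOn_tsum (fun r => by fun_prop) ha fun r w hw => ?_
    rw [norm_mul, norm_pow]
    exact mul_le_of_le_one_right (norm_nonneg _)
      (pow_le_one₀ (norm_nonneg w) (mem_closedBall_zero_iff.mp hw))
  exact hcont.continuousAt (Metric.closedBall_mem_nhds 0 one_pos)

theorem Asymptotics.isLittleO_mul_sub_mul_of_tendsto {α 𝕜 : Type*} [NormedField 𝕜] {l : Filter α}
    {u g : α → 𝕜} {c : 𝕜} (hg : Tendsto g l (𝓝 c)) :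
    (fun x => u x * g x - c * u x) =o[l] u := by
  have hsmall : (fun x => g x - c) =o[l] fun _ => (1 : 𝕜) :=
    (isLittleO_one_iff 𝕜).mpr (tendsto_sub_nhds_zero_iff.mpr hg)
  simpa [mul_sub, mul_comm] using (isBigO_refl u l).mul_isLittleO hsmall

noncomputable def besselF (n : ℕ) (w : ℂ) : ℂ :=
  ∑' r : ℕ, ((-1 : ℂ) ^ r / ((r ! : ℂ) * ((n + r)! : ℂ))) * w ^ r

theorem besselJNat_eq_mul_besselF (n : ℕ) (z : ℂ) :
    besselJNat n z = (z / 2) ^ n * besselF n ((z / 2) ^ 2) := by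
  rw [besselJNat, besselF, ← tsum_mul_left]
  congr 1 with r
  rw [pow_add, pow_mul]
  ring

theorem continuousAt_besselF (n : ℕ) : ContinuousAt (besselF n) 0 := by
  refine continuousAt_tsum_mul_pow _ (.of_nonneg_of_le (fun _ => norm_nonneg _) (fun r => ?_)
    (by simpa using Real.summable_pow_div_factorial 1))
  rw [norm_div, norm_pow, norm_neg, norm_one, one_pow, norm_mul, Complex.norm_natCast,
    Complex.norm_natCast, one_div]
  exact inv_anti₀ (by positivity)
    (le_mul_of_one_le_right (by positivity) (mod_cast (n + r).factorial_pos))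

theorem besselF_apply_zero (n : ℕ) : besselF n 0 = (n ! : ℂ)⁻¹ := by
  rw [besselF, tsum_eq_single 0 fun r hr => by simp [hr]]
  simp

theorem besselJ_natCast (n : ℕ) (z : ℂ) : besselJ n z = besselJNat n z := by
  simp [besselJ]

noncomputable def besselLCore (m k : ℕ) (w : ℂ) : ℂ :=
  w * besselF (k + m + 2) w * besselF (k + 1) w - besselF (k + m + 1) w * besselF k w

theorem besselL_eq_mul_besselLCore (m k : ℕ) (z : ℂ) :
    besselL m ((k + m + 1 : ℕ) : ℤ) z =
      (z / 2) ^ (2 * k + m + 1) * besselLCore m k ((z / 2) ^ 2) := by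
  have e1 : ((k + m + 1 : ℕ) : ℤ) + 1 = ((k + m + 2 : ℕ) : ℤ) := by push_cast; ring
  have e2 : ((k + m + 1 : ℕ) : ℤ) - m = ((k + 1 : ℕ) : ℤ) := by push_cast; ring
  have e3 : ((k + m + 1 : ℕ) : ℤ) - m - 1 = (k : ℤ) := by push_cast; ring
  rw [besselL, e1, e3, e2]
  simp only [besselLCore, besselJ_natCast, besselJNat_eq_mul_besselF]
  ring

theorem continuousAt_besselLCore (m k : ℕ) : ContinuousAt (besselLCore m k) 0 := by
  have hF := continuousAt_besselF
  unfold besselLCore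
  fun_prop

theorem besselLCore_apply_zero (m k : ℕ) :
    besselLCore m k 0 = -(((k + m + 1)! : ℂ)⁻¹ * (k ! : ℂ)⁻¹) := by
  simp [besselLCore, besselF_apply_zero]

theorem stmt3 (m ν : ℕ) (h : m + 1 ≤ ν) :
    (fun z : ℂ => besselL m ν z +
        z ^ (2 * ν - m - 1) /
          ((2 : ℂ) ^ (2 * ν - m - 1) * (Nat.factorial ν : ℂ) * (Nat.factorial (ν - m - 1) : ℂ)))
      =o[nhds (0 : ℂ)] fun z : ℂ => z ^ (2 * ν - m - 1) := by
  obtain ⟨k, rfl⟩ : ∃ k, ν = k + m + 1 := ⟨ν - m - 1, by omega⟩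
  rw [show 2 * (k + m + 1) - m - 1 = 2 * k + m + 1 by omega, show k + m + 1 - m - 1 = k by omega]
  have hcore : Tendsto (fun z : ℂ => besselLCore m k ((z / 2) ^ 2) / 2 ^ (2 * k + m + 1)) (𝓝 0)
      (𝓝 (besselLCore m k 0 / 2 ^ (2 * k + m + 1))) := by
    have hw : ContinuousAt (fun z : ℂ => (z / 2) ^ 2) 0 := by fun_prop
    have := ((continuousAt_besselLCore m k).comp_of_eq hw (by simp)).div_const (2 ^ (2 * k + m + 1))
    simpa using this.tendsto
  refine (isLittleO_mul_sub_mul_of_tendsto (u := fun z => z ^ (2 * k + m + 1))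
    hcore).congr_left fun z => ?_
  rw [besselL_eq_mul_besselLCore, besselLCore_apply_zero]
  simp only [div_pow]
  field_simp
  ring
end

section
/- Let m ≥ 0 and ν be integers and λ a nonzero real zero of L_{m,ν} with J_ν(λ) J_{ν-m}(λ) ≠ 0. Then the quantity N(λ) := (J_ν(λ)²/2)(J_ν'(λ)²/J_ν(λ)² + J_{ν-m}'(λ)²/J_{ν-m}(λ)²) + (J_ν(λ)²/2)(2 - ((ν-m)² + ν²)/λ²) equals ∫₀¹ J_ν(λr)² r dr + (J_ν(λ)²/J_{ν-m}(λ)²) ∫₀¹ J_{ν-m}(λr)² r dr; in particular N(λ) > 0. -/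
/-!
Both integrals are instances of Lommel's formula
`∫₀¹ f(ar)² r dr = (f'(a)² + (1 - ν²/a²) f(a)²) / 2` for a solution `f` of Bessel's equation
`z² f'' + z f' + (z² - ν²) f = 0`: by the equation, `(z² f'(z)² + (z² - ν²) f(z)²) / 2` has
derivative `z f(z)²`, and it vanishes at `0` because the equation at `z = 0` says `ν² f(0) = 0`.
Bessel's equation for `J_n` is checked on its power series, differentiated termwise. Since `J_n`
is real on the real axis, the right-hand side is `∫₀¹ J_ν(λr)² r dr > 0` plus a nonnegative
multiple of `∫₀¹ J_{ν-m}(λr)² r dr`.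
-/

open scoped Nat
open Asymptotics MeasureTheory

/-- `L_{m,ν}(z) = -z^m (d/dz)(z^{-m} J_ν(z) J_{ν-m}(z))`. -/
noncomputable def besselLd (m : ℕ) (ν : ℤ) (z : ℂ) : ℂ :=
  -z ^ m * deriv (fun w : ℂ => w ^ (-(m : ℤ)) * (besselJ ν w * besselJ (ν - m) w)) z

section TermwiseDerivative

variable {a : ℕ → ℂ} {e : ℕ → ℕ}

theorem summable_norm_mul_deriv_pow (ha : ∀ z : ℂ, Summable fun r => ‖a r * z ^ e r‖) (z : ℂ) :
    Summable fun r => ‖a r * e r * z ^ (e r - 1)‖ := by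
  set R := max ‖z‖ 1
  refine .of_nonneg_of_le (fun _ => norm_nonneg _) (fun r => ?_) (ha (2 * R))
  have hR : 1 ≤ R := le_max_right _ _
  have he : (e r : ℝ) ≤ 2 ^ e r := by exact_mod_cast Nat.lt_two_pow_self.le
  calc ‖a r * e r * z ^ (e r - 1)‖ = ‖a r‖ * e r * ‖z‖ ^ (e r - 1) := by
        rw [norm_mul, norm_mul, norm_pow, Complex.norm_natCast]
    _ ≤ ‖a r‖ * 2 ^ e r * R ^ e r := by
        gcongr
        calc ‖z‖ ^ (e r - 1) ≤ R ^ (e r - 1) := by gcongr; exact le_max_left _ _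
          _ ≤ R ^ e r := pow_le_pow_right₀ hR (Nat.sub_le _ _)
    _ = ‖a r * ((2 : ℂ) * R) ^ e r‖ := by
        rw [norm_mul, norm_pow, norm_mul, Complex.norm_ofNat, Complex.norm_real,
          Real.norm_of_nonneg (by positivity), mul_pow, mul_assoc]

theorem hasDerivAt_tsum_mul_pow (ha : ∀ z : ℂ, Summable fun r => ‖a r * z ^ e r‖) (z : ℂ) :
    HasDerivAt (fun w => ∑' r, a r * w ^ e r) (∑' r, a r * e r * z ^ (e r - 1)) z := by
  set R := ‖z‖ + 1
  have hz : z ∈ Metric.ball (0 : ℂ) R := by simp [R]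
  refine hasDerivAt_tsum_of_isPreconnected (g := fun r w => a r * w ^ e r)
    (g' := fun r w => a r * e r * w ^ (e r - 1)) (summable_norm_mul_deriv_pow ha R)
    Metric.isOpen_ball (convex_ball _ _).isPreconnected (fun r w _ => ?_) (fun r w hw => ?_)
    hz (ha z).of_norm hz
  · have := (hasDerivAt_pow (e r) w).const_mul (a r)
    rwa [← mul_assoc] at this
  · rw [mem_ball_zero_iff] at hw
    simp only [norm_mul, norm_pow, Complex.norm_natCast, Complex.norm_real,
      Real.norm_of_nonneg (by positivity : 0 ≤ R)]
    gcongr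

theorem hasSum_euler_operator (ha : ∀ z : ℂ, Summable fun r => ‖a r * z ^ e r‖) (z : ℂ) :
    HasSum (fun r => a r * (e r : ℂ) ^ 2 * z ^ e r)
      (z ^ 2 * (∑' r, a r * e r * ((e r - 1 : ℕ) : ℂ) * z ^ (e r - 1 - 1)) +
        z * ∑' r, a r * e r * z ^ (e r - 1)) := by
  have h1 := (summable_norm_mul_deriv_pow ha z).of_norm.hasSum
  have h2 := (summable_norm_mul_deriv_pow (summable_norm_mul_deriv_pow ha) z).of_norm.hasSum
  refine ((h2.mul_left (z ^ 2)).add (h1.mul_left z)).congr_fun fun r => ?_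
  -- for `e r < 2` the truncated exponents do no harm: their coefficients vanish
  rcases e r with _ | _ | k
  · simp
  · simp [mul_comm]
  · simp only [Nat.add_sub_cancel]
    push_cast
    ring

theorem deriv_tsum_mul_pow (ha : ∀ z : ℂ, Summable fun r => ‖a r * z ^ e r‖) :
    deriv (fun w => ∑' r, a r * w ^ e r) = fun z => ∑' r, a r * e r * z ^ (e r - 1) :=
  funext fun z => (hasDerivAt_tsum_mul_pow ha z).deriv

theorem differentiable_tsum_mul_pow (ha : ∀ z : ℂ, Summable fun r => ‖a r * z ^ e r‖) :
    Differentiable ℂ fun w => ∑' r, a r * w ^ e r :=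
  fun z => (hasDerivAt_tsum_mul_pow ha z).differentiableAt

end TermwiseDerivative

noncomputable def besselCoeff (n r : ℕ) : ℂ := (-1) ^ r / (r ! * (n + r)! * 2 ^ (n + 2 * r))

theorem besselJNat_eq_tsum (n : ℕ) :
    besselJNat n = fun z => ∑' r, besselCoeff n r * z ^ (n + 2 * r) := by
  funext z
  refine tsum_congr fun r => ?_
  rw [besselCoeff, div_pow]
  field_simp

theorem summable_norm_besselCoeff_mul_pow (n : ℕ) (z : ℂ) :
    Summable fun r => ‖besselCoeff n r * z ^ (n + 2 * r)‖ := by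
  set x := ‖z‖ / 2
  refine .of_nonneg_of_le (fun _ => norm_nonneg _) (fun r => ?_)
    ((Real.summable_pow_div_factorial (x ^ 2)).mul_left (x ^ n))
  have hfac : (1 : ℝ) ≤ (n + r)! := by exact_mod_cast (n + r).factorial_pos
  calc ‖besselCoeff n r * z ^ (n + 2 * r)‖ = x ^ (n + 2 * r) / r ! / (n + r)! := by
        simp only [besselCoeff, norm_mul, norm_div, norm_pow, norm_neg, norm_one, one_pow,
          Complex.norm_natCast, Complex.norm_ofNat, x, div_pow]
        ring
    _ ≤ x ^ (n + 2 * r) / r ! := div_le_self (by positivity) hfac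
    _ = x ^ n * ((x ^ 2) ^ r / r !) := by rw [pow_add, pow_mul, mul_div_assoc]

theorem besselCoeff_succ (n r : ℕ) :
    besselCoeff n (r + 1) * (4 * ((r : ℂ) + 1) * ((n : ℂ) + r + 1)) = -besselCoeff n r := by
  have hr : (r : ℂ) + 1 ≠ 0 := Nat.cast_add_one_ne_zero r
  have hnr : (n : ℂ) + r + 1 ≠ 0 := by exact_mod_cast Nat.succ_ne_zero (n + r)
  simp only [besselCoeff, show n + (r + 1) = n + r + 1 by omega, Nat.factorial_succ,
    show n + 2 * (r + 1) = n + 2 * r + 2 by omega]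
  push_cast
  field_simp
  ring

theorem hasSum_besselCoeff_mul_sq_sub_sq (n : ℕ) (z : ℂ) :
    HasSum (fun r => besselCoeff n r * (((n + 2 * r : ℕ) : ℂ) ^ 2 - (n : ℂ) ^ 2) * z ^ (n + 2 * r))
      (-z ^ 2 * besselJNat n z) := by
  rw [← hasSum_nat_add_iff' 1]
  simp only [Finset.sum_range_one, Nat.add_zero, sub_self, mul_zero, zero_mul,
    sub_zero, besselJNat_eq_tsum]
  refine ((summable_norm_besselCoeff_mul_pow n z).of_norm.hasSum.mul_left (-z ^ 2)).congr_fun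
    fun r => ?_
  push_cast
  linear_combination (z ^ (n + 2 * r) * z ^ 2) * besselCoeff_succ n r

theorem besselJNat_ode (n : ℕ) (z : ℂ) :
    z ^ 2 * deriv (deriv (besselJNat n)) z + z * deriv (besselJNat n) z +
      (z ^ 2 - (n : ℂ) ^ 2) * besselJNat n z = 0 := by
  have hs := summable_norm_besselCoeff_mul_pow n
  have hJ := (hs z).of_norm.hasSum.mul_left ((n : ℂ) ^ 2)
  have hEuler := hasSum_euler_operator hs z
  have hsum := (hEuler.sub hJ).unique <|
    (hasSum_besselCoeff_mul_sq_sub_sq n z).congr_fun fun r => by ring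
  rw [besselJNat_eq_tsum] at hsum ⊢
  rw [deriv_tsum_mul_pow hs, deriv_tsum_mul_pow (summable_norm_mul_deriv_pow hs)]
  linear_combination hsum

theorem differentiable_besselJNat (n : ℕ) : Differentiable ℂ (besselJNat n) := by
  rw [besselJNat_eq_tsum]
  exact differentiable_tsum_mul_pow (summable_norm_besselCoeff_mul_pow n)

theorem differentiable_deriv_besselJNat (n : ℕ) : Differentiable ℂ (deriv (besselJNat n)) := by
  have hs := summable_norm_besselCoeff_mul_pow n
  rw [besselJNat_eq_tsum, deriv_tsum_mul_pow hs]
  exact differentiable_tsum_mul_pow (summable_norm_mul_deriv_pow hs)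

theorem conj_besselJNat_ofReal (n : ℕ) (x : ℝ) :
    (starRingEnd ℂ) (besselJNat n x) = besselJNat n x := by
  rw [besselJNat_eq_tsum, Complex.conj_tsum]
  refine tsum_congr fun r => ?_
  simp [besselCoeff, map_div₀, map_ofNat]

theorem besselJ_eq_mul_besselJNat (n : ℤ) :
    ∃ c : ℝ, besselJ n = fun z => c * besselJNat n.natAbs z := by
  refine ⟨if 0 ≤ n then 1 else (-1) ^ n, funext fun z => ?_⟩
  unfold besselJ
  split_ifs with hn
  · push_cast
    rw [one_mul, show n.toNat = n.natAbs by omega]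
  · push_cast
    rw [show (-n).toNat = n.natAbs by omega]

theorem differentiable_besselJ (n : ℤ) : Differentiable ℂ (besselJ n) := by
  obtain ⟨c, hc⟩ := besselJ_eq_mul_besselJNat n
  rw [hc]
  exact (differentiable_besselJNat _).const_mul _

theorem differentiable_deriv_besselJ (n : ℤ) : Differentiable ℂ (deriv (besselJ n)) := by
  obtain ⟨c, hc⟩ := besselJ_eq_mul_besselJNat n
  rw [hc, deriv_const_mul_field']
  exact (differentiable_deriv_besselJNat _).const_mul _

theorem besselJ_ode (n : ℤ) (z : ℂ) :
    z ^ 2 * deriv (deriv (besselJ n)) z + z * deriv (besselJ n) z +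
      (z ^ 2 - (n : ℂ) ^ 2) * besselJ n z = 0 := by
  obtain ⟨c, hc⟩ := besselJ_eq_mul_besselJNat n
  have hn : ((n.natAbs : ℕ) : ℂ) ^ 2 = (n : ℂ) ^ 2 := by
    rw [← Int.cast_natCast, ← Int.cast_pow, Int.natAbs_sq, Int.cast_pow]
  rw [hc, deriv_const_mul_field', deriv_const_mul_field', ← hn]
  linear_combination (c : ℂ) * besselJNat_ode n.natAbs z

theorem ofReal_re_besselJ (n : ℤ) (x : ℝ) : ((besselJ n x).re : ℂ) = besselJ n x := by
  obtain ⟨c, hc⟩ := besselJ_eq_mul_besselJNat n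
  rw [← Complex.conj_eq_iff_re, hc, map_mul, Complex.conj_ofReal, conj_besselJNat_ofReal]

section BesselEquation

variable {f : ℂ → ℂ} {ν : ℂ}

theorem hasDerivAt_lommel_of_bessel_ode (hf : Differentiable ℂ f)
    (hf' : Differentiable ℂ (deriv f))
    (hode : ∀ z, z ^ 2 * deriv (deriv f) z + z * deriv f z + (z ^ 2 - ν ^ 2) * f z = 0) (z : ℂ) :
    HasDerivAt (fun w => (w ^ 2 * deriv f w ^ 2 + (w ^ 2 - ν ^ 2) * f w ^ 2) / 2)
      (z * f z ^ 2) z := by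
  have h := ((((hasDerivAt_pow 2 z).mul ((hf' z).hasDerivAt.pow 2)).add
    (((hasDerivAt_pow 2 z).sub_const (ν ^ 2)).mul ((hf z).hasDerivAt.pow 2))).div_const 2)
  refine h.congr_deriv ?_
  simp only [Pi.pow_apply]
  push_cast
  linear_combination deriv f z * hode z

theorem integral_sq_mul_of_bessel_ode (hf : Differentiable ℂ f)
    (hf' : Differentiable ℂ (deriv f))
    (hode : ∀ z, z ^ 2 * deriv (deriv f) z + z * deriv f z + (z ^ 2 - ν ^ 2) * f z = 0)
    {a : ℝ} (ha : a ≠ 0) :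
    ∫ r in (0:ℝ)..1, f (a * r) ^ 2 * (r : ℂ) =
      deriv f a ^ 2 / 2 + (1 - ν ^ 2 / (a : ℂ) ^ 2) * f a ^ 2 / 2 := by
  set G : ℂ → ℂ := fun w => (w ^ 2 * deriv f w ^ 2 + (w ^ 2 - ν ^ 2) * f w ^ 2) / 2
  have haC : (a : ℂ) ≠ 0 := Complex.ofReal_ne_zero.2 ha
  have hG : ∀ r : ℝ, HasDerivAt (fun r : ℝ => G (a * r) / (a : ℂ) ^ 2) (f (a * r) ^ 2 * r) r := by
    intro r
    have h := (((hasDerivAt_lommel_of_bessel_ode hf hf' hode (a * r)).comp (r : ℂ)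
      ((hasDerivAt_id (r : ℂ)).const_mul (a : ℂ))).comp_ofReal).div_const ((a : ℂ) ^ 2)
    refine h.congr_deriv ?_
    field_simp
  have hcont : Continuous fun r : ℝ => f (a * r) ^ 2 * (r : ℂ) := by
    have := hf.continuous
    fun_prop
  have hG0 : G 0 = 0 := by simpa [G] using hode 0
  rw [intervalIntegral.integral_eq_sub_of_hasDerivAt (fun r _ => hG r)
    (hcont.intervalIntegrable 0 1)]
  simp only [Complex.ofReal_one, Complex.ofReal_zero, mul_one, mul_zero, hG0, zero_div, sub_zero, G]
  field_simp

end BesselEquation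

theorem integral_sq_mul_pos {g : ℝ → ℝ} (hg : Continuous g) (h1 : g 1 ≠ 0) :
    0 < ∫ r in (0:ℝ)..1, g r ^ 2 * r := by
  have hcont : Continuous fun r => g r ^ 2 * r := by fun_prop
  have hnonneg : 0 ≤ᵐ[volume.restrict (Set.uIoc 0 1)] fun r => g r ^ 2 * r := by
    refine ae_restrict_of_forall_mem measurableSet_uIoc fun r hr => ?_
    rw [Set.uIoc_of_le zero_le_one] at hr
    exact mul_nonneg (sq_nonneg _) hr.1.le
  rw [intervalIntegral.integral_pos_iff_support_of_nonneg_ae' hnonneg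
    (hcont.intervalIntegrable 0 1)]
  refine ⟨zero_lt_one, ?_⟩
  have hU : (Function.support (fun r => g r ^ 2 * r) ∩ Set.Ioo 0 1).Nonempty := by
    have h1mem : (1 : ℝ) ∈ closure (Set.Ioo 0 1) := by
      rw [closure_Ioo zero_ne_one]; exact Set.right_mem_Icc.2 zero_le_one
    exact mem_closure_iff.1 h1mem _ hcont.isOpen_support (by simpa using h1)
  calc (0 : ENNReal) < volume (Function.support (fun r => g r ^ 2 * r) ∩ Set.Ioo 0 1) :=
        (hcont.isOpen_support.inter isOpen_Ioo).measure_pos volume hU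
    _ ≤ _ := measure_mono (Set.inter_subset_inter_right _ Set.Ioo_subset_Ioc_self)

theorem integral_besselJ_sq_mul (n : ℤ) {a : ℝ} (ha : a ≠ 0) :
    ∫ r in (0:ℝ)..1, besselJ n (a * r) ^ 2 * (r : ℂ) =
      deriv (besselJ n) a ^ 2 / 2 + (1 - (n : ℂ) ^ 2 / (a : ℂ) ^ 2) * besselJ n a ^ 2 / 2 :=
  integral_sq_mul_of_bessel_ode (differentiable_besselJ n) (differentiable_deriv_besselJ n)
    (besselJ_ode n) ha

theorem integral_besselJ_sq_mul_eq_ofReal (n : ℤ) (a : ℝ) :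
    ∫ r in (0:ℝ)..1, besselJ n (a * r) ^ 2 * (r : ℂ) =
      ((∫ r in (0:ℝ)..1, (besselJ n (a * r)).re ^ 2 * r : ℝ) : ℂ) := by
  rw [← intervalIntegral.integral_ofReal]
  refine intervalIntegral.integral_congr fun r _ => ?_
  rw [Complex.ofReal_mul, Complex.ofReal_pow, ← Complex.ofReal_mul, ofReal_re_besselJ]

theorem integral_besselJ_sq_mul_pos (n : ℤ) {a : ℝ} (h : besselJ n a ≠ 0) :
    0 < ∫ r in (0:ℝ)..1, (besselJ n (a * r)).re ^ 2 * r := by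
  refine integral_sq_mul_pos (by have := differentiable_besselJ n |>.continuous; fun_prop) ?_
  rw [Complex.ofReal_one, mul_one]
  contrapose! h
  rw [← ofReal_re_besselJ, h, Complex.ofReal_zero]

theorem besselJ_sq_normalization_eq_integral (ν μ : ℤ) {lam : ℝ} (hlam : lam ≠ 0)
    (hν : besselJ ν lam ≠ 0) (hμ : besselJ μ lam ≠ 0) :
    (besselJ ν lam ^ 2 / 2) *
        (deriv (besselJ ν) lam ^ 2 / besselJ ν lam ^ 2 +
          deriv (besselJ μ) lam ^ 2 / besselJ μ lam ^ 2) +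
      (besselJ ν lam ^ 2 / 2) * (2 - ((μ : ℂ) ^ 2 + (ν : ℂ) ^ 2) / (lam : ℂ) ^ 2) =
        (∫ r in (0:ℝ)..1, besselJ ν (lam * r) ^ 2 * (r : ℂ)) +
          (besselJ ν lam ^ 2 / besselJ μ lam ^ 2) *
            ∫ r in (0:ℝ)..1, besselJ μ (lam * r) ^ 2 * (r : ℂ) := by
  have hlamC : (lam : ℂ) ≠ 0 := Complex.ofReal_ne_zero.2 hlam
  rw [integral_besselJ_sq_mul ν hlam, integral_besselJ_sq_mul μ hlam]
  field_simp
  ring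

theorem exists_pos_ofReal_eq_integral_besselJ_sq (ν μ : ℤ) (lam : ℝ) (hν : besselJ ν lam ≠ 0) :
    ∃ x : ℝ, 0 < x ∧ (x : ℂ) =
      (∫ r in (0:ℝ)..1, besselJ ν (lam * r) ^ 2 * (r : ℂ)) +
        (besselJ ν lam ^ 2 / besselJ μ lam ^ 2) *
          ∫ r in (0:ℝ)..1, besselJ μ (lam * r) ^ 2 * (r : ℂ) := by
  set A := ∫ r in (0:ℝ)..1, (besselJ ν (lam * r)).re ^ 2 * r
  set B := ∫ r in (0:ℝ)..1, (besselJ μ (lam * r)).re ^ 2 * r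
  have hnonneg : 0 ≤ B :=
    intervalIntegral.integral_nonneg zero_le_one fun r hr => mul_nonneg (sq_nonneg _) hr.1
  refine ⟨A + (besselJ ν lam).re ^ 2 / (besselJ μ lam).re ^ 2 * B,
    add_pos_of_pos_of_nonneg (integral_besselJ_sq_mul_pos ν hν)
      (mul_nonneg (by positivity) hnonneg), ?_⟩
  rw [integral_besselJ_sq_mul_eq_ofReal, integral_besselJ_sq_mul_eq_ofReal,
    ← ofReal_re_besselJ ν lam, ← ofReal_re_besselJ μ lam]
  push_cast
  rfl

theorem stmt13_general (m : ℕ) (ν : ℤ) (lam : ℝ) (hlam : lam ≠ 0)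
    (hJ : besselJ ν lam * besselJ (ν - m) lam ≠ 0) :
    (besselJ ν lam ^ 2 / 2) *
        (deriv (besselJ ν) lam ^ 2 / besselJ ν lam ^ 2 +
          deriv (besselJ (ν - m)) lam ^ 2 / besselJ (ν - m) lam ^ 2) +
      (besselJ ν lam ^ 2 / 2) * (2 - (((ν : ℂ) - m) ^ 2 + (ν : ℂ) ^ 2) / (lam : ℂ) ^ 2) =
        (∫ r in (0:ℝ)..1, besselJ ν (lam * r) ^ 2 * (r : ℂ)) +
          (besselJ ν lam ^ 2 / besselJ (ν - m) lam ^ 2) *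
            ∫ r in (0:ℝ)..1, besselJ (ν - m) (lam * r) ^ 2 * (r : ℂ) ∧
    0 < ((besselJ ν lam ^ 2 / 2) *
        (deriv (besselJ ν) lam ^ 2 / besselJ ν lam ^ 2 +
          deriv (besselJ (ν - m)) lam ^ 2 / besselJ (ν - m) lam ^ 2) +
      (besselJ ν lam ^ 2 / 2) *
        (2 - (((ν : ℂ) - m) ^ 2 + (ν : ℂ) ^ 2) / (lam : ℂ) ^ 2)).re ∧
    ((besselJ ν lam ^ 2 / 2) *
        (deriv (besselJ ν) lam ^ 2 / besselJ ν lam ^ 2 +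
          deriv (besselJ (ν - m)) lam ^ 2 / besselJ (ν - m) lam ^ 2) +
      (besselJ ν lam ^ 2 / 2) *
        (2 - (((ν : ℂ) - m) ^ 2 + (ν : ℂ) ^ 2) / (lam : ℂ) ^ 2)).im = 0 := by
  obtain ⟨hν, hνm⟩ := mul_ne_zero_iff.1 hJ
  have hEq := besselJ_sq_normalization_eq_integral ν (ν - m) hlam hν hνm
  push_cast at hEq
  obtain ⟨x, hx, hxEq⟩ := exists_pos_ofReal_eq_integral_besselJ_sq ν (ν - m) lam hν
  rw [hEq, ← hxEq, Complex.ofReal_re, Complex.ofReal_im]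
  exact ⟨rfl, hx, rfl⟩

theorem stmt13 (m : ℕ) (ν : ℤ) (lam : ℝ) (hlam : lam ≠ 0)
    (hzero : besselLd m ν lam = 0)
    (hJ : besselJ ν lam * besselJ (ν - m) lam ≠ 0) :
    (besselJ ν lam ^ 2 / 2) *
        (deriv (besselJ ν) lam ^ 2 / besselJ ν lam ^ 2 +
          deriv (besselJ (ν - m)) lam ^ 2 / besselJ (ν - m) lam ^ 2) +
      (besselJ ν lam ^ 2 / 2) * (2 - (((ν : ℂ) - m) ^ 2 + (ν : ℂ) ^ 2) / (lam : ℂ) ^ 2) =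
        (∫ r in (0:ℝ)..1, besselJ ν (lam * r) ^ 2 * (r : ℂ)) +
          (besselJ ν lam ^ 2 / besselJ (ν - m) lam ^ 2) *
            ∫ r in (0:ℝ)..1, besselJ (ν - m) (lam * r) ^ 2 * (r : ℂ) ∧
    0 < ((besselJ ν lam ^ 2 / 2) *
        (deriv (besselJ ν) lam ^ 2 / besselJ ν lam ^ 2 +
          deriv (besselJ (ν - m)) lam ^ 2 / besselJ (ν - m) lam ^ 2) +
      (besselJ ν lam ^ 2 / 2) *
        (2 - (((ν : ℂ) - m) ^ 2 + (ν : ℂ) ^ 2) / (lam : ℂ) ^ 2)).re ∧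
    ((besselJ ν lam ^ 2 / 2) *
        (deriv (besselJ ν) lam ^ 2 / besselJ ν lam ^ 2 +
          deriv (besselJ (ν - m)) lam ^ 2 / besselJ (ν - m) lam ^ 2) +
      (besselJ ν lam ^ 2 / 2) *
        (2 - (((ν : ℂ) - m) ^ 2 + (ν : ℂ) ^ 2) / (lam : ℂ) ^ 2)).im = 0 :=
  stmt13_general m ν lam hlam hJ
end
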